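/- arXiv:0712.1483 — 3 statements merged into one kernel-verified Lean document; each statement's English description precedes it below -/
import Mathlib

section
/- For a continuous function ω : [0,T] → ℝ, the strong variation exponent vex(ω) never lies in the open interval (0,1); that is, either vex(ω) = 0 or vex(ω) ≥ 1. -/
open scoped ENNReal

noncomputable section

/-- Strong `p`-variation of `f` over `[a,b]`: the supremum over all finite
subdivisions `a = t₀ < t₁ < ⋯ < tₙ = b` of `Σᵢ |f(tᵢ) − f(tᵢ₋₁)|^p`. -/
def pVar (p : ℝ) (f : ℝ → ℝ) (a b : ℝ) : ℝ≥0∞ :=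
  ⨆ (n : ℕ) (t : Fin (n + 1) → ℝ)
    (_ : StrictMono t ∧ t 0 = a ∧ t (Fin.last n) = b),
    ∑ i : Fin n, ENNReal.ofReal (|f (t i.succ) - f (t i.castSucc)| ^ p)

/-- `v` is a strong variation exponent of `f` over `[0,T]`:
`var_p(f)` is finite for `p > v` and infinite for `p < v`. -/
def IsVex (T : ℝ) (f : ℝ → ℝ) (v : ℝ≥0∞) : Prop :=
  (∀ p : ℝ, 0 < p → v < ENNReal.ofReal p → pVar p f 0 T < ⊤) ∧
  (∀ p : ℝ, 0 < p → ENNReal.ofReal p < v → pVar p f 0 T = ⊤)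

/-- The strong variation exponent of `f` over `[0,T]`. -/
def vex (T : ℝ) (f : ℝ → ℝ) : ℝ≥0∞ :=
  sInf {v : ℝ≥0∞ | ∀ p : ℝ, 0 < p → v < ENNReal.ofReal p → pVar p f 0 T < ⊤}

/-- The sample space: continuous real-valued functions on `[0,T]`. -/
def GSpace (T : ℝ) := {f : ℝ → ℝ // ContinuousOn f (Set.Icc 0 T)}

/-- The filtration: `ℱ_t` is generated by the evaluation maps `ω ↦ ω(s)`, `s ∈ [0,t]`. -/
def gFiltration (T t : ℝ) : MeasurableSpace (GSpace T) :=
  ⨆ s ∈ Set.Icc (0 : ℝ) t, MeasurableSpace.comap (fun ω : GSpace T => ω.1 s) inferInstance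

/-- An elementary trading strategy: an increasing sequence of stopping times
`τₙ` (with values in `[0,T] ∪ {∞}`, only finitely many finite on each `ω`)
together with bounded `ℱ_{τₙ}`-measurable portfolios `hₙ`. -/
structure ElemStrategy (T : ℝ) where
  τ : ℕ → GSpace T → ℝ≥0∞
  h : ℕ → GSpace T → ℝ
  mono : ∀ n ω, τ n ω ≤ τ (n + 1) ω
  codom : ∀ n ω, τ n ω ≤ ENNReal.ofReal T ∨ τ n ω = ⊤
  fin : ∀ ω, Set.Finite {n | τ n ω ≠ ⊤}
  stopping : ∀ n (t : ℝ), (gFiltration T t).MeasurableSet' {ω | τ n ω ≤ ENNReal.ofReal t}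
  bdd : ∀ n, ∃ C : ℝ, ∀ ω, |h n ω| ≤ C
  adapted : ∀ n (B : Set ℝ), MeasurableSet B → ∀ t : ℝ,
    (gFiltration T t).MeasurableSet' ({ω | h n ω ∈ B} ∩ {ω | τ n ω ≤ ENNReal.ofReal t})

/-- The elementary capital process
`K_t(ω) = c + Σₙ hₙ(ω) (ω(τ_{n+1} ∧ t) − ω(τₙ ∧ t))`. -/
def ElemStrategy.capital {T : ℝ} (G : ElemStrategy T) (c : ℝ) (t : ℝ) (ω : GSpace T) : ℝ :=
  c + ∑' n : ℕ,
    G.h n ω * (ω.1 ((G.τ (n + 1) ω ⊓ ENNReal.ofReal t).toReal)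
      - ω.1 ((G.τ n ω ⊓ ENNReal.ofReal t).toReal))

/-- A positive capital process: a countable sum of positive elementary capital
processes with summable positive initial capitals. -/
structure PosCapital (T : ℝ) where
  G : ℕ → ElemStrategy T
  c : ℕ → ℝ
  c_nonneg : ∀ n, 0 ≤ c n
  c_summable : Summable c
  pos : ∀ n (t : ℝ), t ∈ Set.Icc 0 T → ∀ ω, 0 ≤ (G n).capital (c n) t ω

/-- The value (in `[0,∞]`) of a positive capital process at time `t`. -/
def PosCapital.value {T : ℝ} (S : PosCapital T) (t : ℝ) (ω : GSpace T) : ℝ≥0∞ :=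
  ∑' n : ℕ, ENNReal.ofReal ((S.G n).capital (S.c n) t ω)

/-- The initial value `S₀ = Σₙ cₙ` of a positive capital process. -/
def PosCapital.init {T : ℝ} (S : PosCapital T) : ℝ≥0∞ :=
  ∑' n : ℕ, ENNReal.ofReal (S.c n)

/-- Game-theoretic upper probability of `E ⊆ Ω`:
`inf {S₀ : S positive capital process, S_T ≥ 1_E}`. -/
def upperProb (T : ℝ) (E : Set (GSpace T)) : ℝ≥0∞ :=
  ⨅ (S : PosCapital T) (_ : ∀ ω, E.indicator (fun _ => (1 : ℝ≥0∞)) ω ≤ S.value T ω), S.init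

/-- The number of upcrossings (as an element of `[0,∞]`) of the open interval
`(a,b)` by `f` during the time interval `[0,t]`. -/
def upcross (f : ℝ → ℝ) (a b t : ℝ) : ℝ≥0∞ :=
  ⨆ (n : ℕ) (u : Fin n → ℝ) (v : Fin n → ℝ)
    (_ : (∀ i, 0 ≤ u i ∧ u i < v i ∧ v i ≤ t) ∧
         (∀ i j : Fin n, i < j → v i < u j) ∧
         (∀ i, f (u i) < a ∧ b < f (v i))),
    (n : ℝ≥0∞)

/-- `M_t(f,δ) = Σ_{k∈ℤ} M_t(f,(kδ,(k+1)δ))`: the total number of upcrossings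
of the intervals of the `δ`-grid by `f` during `[0,t]`. -/
def gridUpcross (f : ℝ → ℝ) (δ t : ℝ) : ℝ≥0∞ :=
  ∑' k : ℤ, upcross f (k * δ) ((k + 1) * δ) t

/-- The successive hitting times of new points of the grid `δℤ`:
`τ₀ = 0`, `τ_{n+1} = inf {t ∈ (τₙ, T] : f(t) ∈ δℤ \ {f(τₙ)}}` (with `inf ∅ = ∞`). -/
def gridTimes (T δ : ℝ) (f : ℝ → ℝ) : ℕ → ℝ≥0∞
  | 0 => 0
  | n + 1 => sInf {s : ℝ≥0∞ | ∃ t : ℝ, s = ENNReal.ofReal t ∧ t ≤ T ∧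
      gridTimes T δ f n < ENNReal.ofReal t ∧ (∃ k : ℤ, f t = (k : ℝ) * δ) ∧
      f t ≠ f ((gridTimes T δ f n).toReal)}

/-!
If `q < 1`, then on a subdivision whose increments are all at most `ε` (which uniform
continuity provides), `Σ |Δᵢ| ≤ ε^(1-q) Σ |Δᵢ|^q ≤ ε^(1-q) var_q(ω)`. So finite `q`-variation
forces a continuous `ω` to be constant, and then `var_p(ω) = 0` for every `p > 0`. Hence if
`0 < vex(ω) < 1`, a `q ∈ (vex(ω), 1)` makes `ω` constant while a `p ∈ (0, vex(ω))` has
`var_p(ω) = ∞`.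
-/

open Set Filter Topology

section PVariation

variable {p q a b c ε : ℝ} {f : ℝ → ℝ}

theorem Fin.sum_univ_succ_sub_castSucc {M : Type*} [AddCommGroup M] {n : ℕ}
    (g : Fin (n + 1) → M) :
    ∑ i : Fin n, (g i.succ - g i.castSucc) = g (Fin.last n) - g 0 := by
  induction n with
  | zero => simp
  | succ n ih =>
    rw [Fin.sum_univ_castSucc]
    simp only [Fin.succ_castSucc]
    rw [ih (fun i => g i.castSucc)]
    simp only [Fin.succ_last, Fin.castSucc_zero]
    abel

theorem le_rpow_mul_rpow_one_sub {x : ℝ} (hx : 0 ≤ x) (hxε : x ≤ ε) (hq : q ≤ 1) :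
    x ≤ x ^ q * ε ^ (1 - q) :=
  calc x = x ^ q * x ^ (1 - q) := by rw [← Real.rpow_add' hx (by norm_num)]; norm_num
    _ ≤ x ^ q * ε ^ (1 - q) := by gcongr

theorem sum_le_pVar {n : ℕ} {t : Fin (n + 1) → ℝ}
    (ht : StrictMono t ∧ t 0 = a ∧ t (Fin.last n) = b) :
    ∑ i : Fin n, ENNReal.ofReal (|f (t i.succ) - f (t i.castSucc)| ^ p) ≤ pVar p f a b :=
  le_iSup₂_of_le n t (le_iSup_of_le ht le_rfl)

theorem pVar_mono_right (hbc : b ≤ c) : pVar p f a b ≤ pVar p f a c := by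
  rcases hbc.eq_or_lt with rfl | hbc
  · rfl
  refine iSup₂_le fun n t => iSup_le fun ⟨hmono, h0, hlast⟩ => ?_
  have hsnoc : StrictMono (Fin.snoc t c : Fin (n + 2) → ℝ) := by
    refine Fin.strictMono_iff_lt_succ.2 fun i => ?_
    induction i using Fin.lastCases with
    | last => simpa [hlast] using hbc
    | cast j =>
      rw [Fin.succ_castSucc, Fin.snoc_castSucc, Fin.snoc_castSucc]
      exact hmono Fin.castSucc_lt_succ
  refine le_trans ?_ (sum_le_pVar (t := Fin.snoc t c) ⟨hsnoc, by simpa using h0, by simp⟩)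
  rw [Fin.sum_univ_castSucc]
  simp only [Fin.succ_castSucc, Fin.snoc_castSucc]
  exact le_self_add

theorem abs_sub_le_pVar_toReal_mul_rpow (hq : q ≤ 1) (hε : 0 ≤ ε) {n : ℕ}
    {t : Fin (n + 1) → ℝ}
    (ht : StrictMono t ∧ t 0 = a ∧ t (Fin.last n) = b) (hfin : pVar q f a b ≠ ⊤)
    (hΔ : ∀ i : Fin n, |f (t i.succ) - f (t i.castSucc)| ≤ ε) :
    |f b - f a| ≤ (pVar q f a b).toReal * ε ^ (1 - q) := by
  have hsum : ∑ i : Fin n, |f (t i.succ) - f (t i.castSucc)| ^ q ≤ (pVar q f a b).toReal := by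
    rw [← ENNReal.ofReal_le_iff_le_toReal hfin,
      ENNReal.ofReal_sum_of_nonneg fun i _ => by positivity]
    exact sum_le_pVar ht
  calc |f b - f a| = |∑ i : Fin n, (f (t i.succ) - f (t i.castSucc))| := by
        rw [Fin.sum_univ_succ_sub_castSucc fun i => f (t i), ht.2.1, ht.2.2]
    _ ≤ ∑ i : Fin n, |f (t i.succ) - f (t i.castSucc)| := Finset.abs_sum_le_sum_abs _ _
    _ ≤ ∑ i : Fin n, |f (t i.succ) - f (t i.castSucc)| ^ q * ε ^ (1 - q) :=
        Finset.sum_le_sum fun i _ => le_rpow_mul_rpow_one_sub (abs_nonneg _) (hΔ i) hq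
    _ = (∑ i : Fin n, |f (t i.succ) - f (t i.castSucc)| ^ q) * ε ^ (1 - q) :=
        (Finset.sum_mul _ _ _).symm
    _ ≤ (pVar q f a b).toReal * ε ^ (1 - q) := by gcongr

theorem ContinuousOn.exists_partition_abs_sub_le (hf : ContinuousOn f (Icc a b))
    (hab : a < b) (hε : 0 < ε) :
    ∃ (n : ℕ) (t : Fin (n + 1) → ℝ), (StrictMono t ∧ t 0 = a ∧ t (Fin.last n) = b) ∧
      ∀ i : Fin n, |f (t i.succ) - f (t i.castSucc)| ≤ ε := by
  obtain ⟨δ, hδ, hfδ⟩ := Metric.uniformContinuousOn_iff_le.1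
    (isCompact_Icc.uniformContinuousOn_of_continuous hf) ε hε
  obtain ⟨N, hN⟩ := exists_nat_gt ((b - a) / δ)
  have hN0 : (0 : ℝ) < N := lt_of_le_of_lt (by positivity) hN
  set h := (b - a) / N with h_def
  have hh : 0 < h := div_pos (sub_pos.2 hab) hN0
  have hhδ : h ≤ δ := by
    rw [h_def, div_le_iff₀ hN0, mul_comm]
    exact ((div_lt_iff₀ hδ).1 hN).le
  set t : Fin (N + 1) → ℝ := fun i => a + i * h
  have hmem : ∀ i, t i ∈ Icc a b := fun i => by
    refine ⟨le_add_of_nonneg_right (by positivity), ?_⟩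
    have hi : (i : ℝ) ≤ N := by exact_mod_cast Fin.is_le i
    have : (i : ℝ) * h ≤ N * h := by gcongr
    rw [h_def, mul_div_cancel₀ _ hN0.ne'] at this
    simp only [t]
    linarith
  refine ⟨N, t, ⟨fun i j hij => ?_, by simp [t], ?_⟩, fun i => ?_⟩
  · simp only [t]
    gcongr
    exact_mod_cast hij
  · simp only [t, Fin.val_last, h_def]
    field_simp
    ring
  · rw [← Real.dist_eq]
    refine hfδ _ (hmem _) _ (hmem _) ?_
    simp only [t, Real.dist_eq, Fin.val_succ, Fin.val_castSucc]
    push_cast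
    rw [show a + (i + 1) * h - (a + i * h) = h by ring, abs_of_pos hh]
    exact hhδ

theorem eq_of_pVar_ne_top (hq : q < 1) (hf : ContinuousOn f (Icc a b)) (hab : a ≤ b)
    (hfin : pVar q f a b ≠ ⊤) : f a = f b := by
  rcases hab.eq_or_lt with rfl | hab
  · rfl
  set K := (pVar q f a b).toReal
  have hbound : ∀ ε > 0, |f b - f a| ≤ K * ε ^ (1 - q) := fun ε hε => by
    obtain ⟨n, t, ht, hΔ⟩ := hf.exists_partition_abs_sub_le hab hε
    exact abs_sub_le_pVar_toReal_mul_rpow hq.le hε.le ht hfin hΔ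
  have hlim : Tendsto (fun ε : ℝ => K * ε ^ (1 - q)) (𝓝[>] 0) (𝓝 0) := by
    have := ((Real.continuousAt_rpow_const 0 (1 - q) (Or.inr (by linarith))).tendsto.const_mul K)
    rw [Real.zero_rpow (by linarith), mul_zero] at this
    exact this.mono_left nhdsWithin_le_nhds
  have := ge_of_tendsto hlim (eventually_nhdsWithin_of_forall hbound)
  exact (sub_eq_zero.1 (abs_nonpos_iff.1 this)).symm

theorem eq_left_of_pVar_ne_top (hq : q < 1) (hf : ContinuousOn f (Icc a b))
    (hfin : pVar q f a b ≠ ⊤) {x : ℝ} (hx : x ∈ Icc a b) : f x = f a :=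
  (eq_of_pVar_ne_top hq (hf.mono (Icc_subset_Icc_right hx.2)) hx.1
    (ne_top_of_le_ne_top hfin (pVar_mono_right hx.2))).symm

theorem pVar_eq_zero_of_eqOn (hp : p ≠ 0) (h : ∀ x ∈ Icc a b, f x = f a) :
    pVar p f a b = 0 := by
  refine nonpos_iff_eq_zero.1 (iSup₂_le fun n t => iSup_le fun ⟨hmono, h0, hlast⟩ => ?_)
  have hmem : ∀ i, t i ∈ Icc a b := fun i =>
    ⟨h0 ▸ hmono.monotone (Fin.zero_le i), hlast ▸ hmono.monotone (Fin.le_last i)⟩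
  simp [h _ (hmem _), Real.zero_rpow hp]

end PVariation

theorem stmt1_general (T : ℝ) (ω : ℝ → ℝ)
    (hω : ContinuousOn ω (Set.Icc 0 T)) (v : ℝ≥0∞) (hv : IsVex T ω v) :
    v = 0 ∨ 1 ≤ v := by
  by_contra! ⟨hv0, hv1⟩
  obtain ⟨q, -, hvq, hq1⟩ := ENNReal.lt_iff_exists_real_btwn.1 hv1
  obtain ⟨p, -, hp0, hpv⟩ := ENNReal.lt_iff_exists_real_btwn.1 (pos_iff_ne_zero.2 hv0)
  have hp : 0 < p := ENNReal.ofReal_pos.1 hp0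
  have hq : 0 < q := ENNReal.ofReal_pos.1 ((zero_le (a := v)).trans_lt hvq)
  have hconst : ∀ x ∈ Icc 0 T, ω x = ω 0 := fun x hx =>
    eq_left_of_pVar_ne_top (ENNReal.ofReal_lt_one.1 hq1) hω (hv.1 q hq hvq).ne hx
  have htop := hv.2 p hp hpv
  rw [pVar_eq_zero_of_eqOn hp.ne' hconst] at htop
  exact ENNReal.zero_ne_top htop

/-- the strong variation exponent never lies in `(0,1)`. -/
theorem stmt1 (T : ℝ) (hT : 0 < T) (ω : ℝ → ℝ)
    (hω : ContinuousOn ω (Set.Icc 0 T)) (v : ℝ≥0∞) (hv : IsVex T ω v) :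
    v = 0 ∨ 1 ≤ v :=
  stmt1_general T ω hω v hv
end
end

section
/- Bruneau's lemma: for every continuous function f : [0,T] → ℝ, every t ∈ (0,T], every 1 ≤ q < p, and every λ ≥ sup_{s∈[0,t]} |f(s) − f(0)|, the strong p-variation of f over [0,t] satisfies var_p(f,[0,t]) ≤ (2^{p+q+1}/(1 − 2^{q−p})) (2 c + 1) λ^p, where c = sup_{k∈ℕ} 2^{−kq} M_t(f, λ2^{−k}) and M_t(f,δ) = Σ_{k∈ℤ} M_t(f,(kδ,(k+1)δ)) is the total number of upcrossings by f of the intervals of the δ-grid during [0,t]. -/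
open scoped ENNReal

noncomputable section

/-! Sort the increments `Δᵢ` of a partition of `[0,t]` into dyadic classes
`λ 2^{-k} < |Δᵢ| ≤ λ 2^{1-k}`. An increment larger than `2δ`, `δ = λ 2^{-(k+1)}`, jumps over a
whole cell of the grid `δℤ`; the values of `f` stay in an interval of length `2λ`, which meets
at most `2^{k+2}` cells, and per cell the upward jumps are bounded by the upcrossings and the
downward ones by the upcrossings plus one. So the `k`-th class has at most
`2 M_t(f, λ2^{-(k+1)}) + 2^{k+2} ≤ 2·2^{(k+1)q} c + 2^{k+2}` members, each contributing at most
`(λ 2^{1-k})^p`, and both resulting series are dominated by `λ^p 2^{p+q+1} Σₖ 2^{k(q-p)}`. -/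

open Finset

section Dyadic

theorem two_rpow_neg_natCast (k : ℕ) : (2 : ℝ) ^ (-(k : ℝ)) = ((2 : ℝ) ^ k)⁻¹ := by
  rw [Real.rpow_neg zero_le_two, Real.rpow_natCast]

theorem two_rpow_one_sub_natCast (k : ℕ) : (2 : ℝ) ^ (1 - (k : ℝ)) = 2 / 2 ^ k := by
  rw [Real.rpow_sub two_pos, Real.rpow_one, Real.rpow_natCast]

theorem exists_dyadic_lt_le {lam Δ : ℝ} (hΔ : 0 < Δ) (hΔlam : Δ ≤ 2 * lam) :
    ∃ k : ℕ, lam * 2 ^ (-(k : ℝ)) < Δ ∧ Δ ≤ lam * 2 ^ (1 - (k : ℝ)) := by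
  obtain ⟨k, hk₁, hk₂⟩ := exists_nat_pow_near ((one_le_div hΔ).2 hΔlam) one_lt_two
  refine ⟨k, ?_, ?_⟩
  · rw [two_rpow_neg_natCast, ← div_eq_mul_inv, div_lt_iff₀ (by positivity)]
    rw [div_lt_iff₀ hΔ, pow_succ] at hk₂
    linarith
  · rw [two_rpow_one_sub_natCast, mul_div_assoc', le_div_iff₀ (by positivity)]
    rw [le_div_iff₀ hΔ] at hk₁
    linarith

theorem sum_ofReal_rpow_le_tsum_card_mul {ι : Type*} [Fintype ι] {lam p : ℝ} (hp : 0 < p)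
    (Δ : ι → ℝ) (hΔ : ∀ i, 0 ≤ Δ i ∧ Δ i ≤ 2 * lam) :
    ∑ i, ENNReal.ofReal (Δ i ^ p) ≤
      ∑' k : ℕ, #{i | lam * 2 ^ (-(k : ℝ)) < Δ i} *
        ENNReal.ofReal ((lam * 2 ^ (1 - (k : ℝ))) ^ p) := by
  have hlayer (i : ι) : ENNReal.ofReal (Δ i ^ p) ≤ ∑' k : ℕ,
      if lam * 2 ^ (-(k : ℝ)) < Δ i then ENNReal.ofReal ((lam * 2 ^ (1 - (k : ℝ))) ^ p) else 0 := by
    rcases (hΔ i).1.eq_or_lt with h | hpos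
    · simp [← h, Real.zero_rpow hp.ne']
    obtain ⟨k, hk₁, hk₂⟩ := exists_dyadic_lt_le hpos (hΔ i).2
    refine le_trans ?_ (ENNReal.le_tsum k)
    rw [if_pos hk₁]
    exact ENNReal.ofReal_le_ofReal (Real.rpow_le_rpow hpos.le hk₂ hp.le)
  refine (sum_le_sum fun i _ => hlayer i).trans_eq ?_
  rw [← Summable.tsum_finsetSum fun _ _ => ENNReal.summable]
  congr 1 with k
  rw [← sum_filter, sum_const, nsmul_eq_mul]

theorem two_rpow_mul_dyadic_rpow_le {lam a b p : ℝ} (k : ℕ) (hlam : 0 ≤ lam)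
    (hab : a + (1 - k) * p ≤ b) :
    2 ^ a * (lam * 2 ^ (1 - (k : ℝ))) ^ p ≤ 2 ^ b * lam ^ p := by
  rw [Real.mul_rpow hlam (by positivity), ← Real.rpow_mul zero_le_two, mul_left_comm,
    ← Real.rpow_add two_pos, mul_comm]
  gcongr
  exact one_le_two

theorem dyadic_term_le {c : ℝ≥0∞} {lam p q : ℝ} (hlam : 0 ≤ lam) (hq : 1 ≤ q) (k : ℕ) :
    (2 * (ENNReal.ofReal (2 ^ (((k + 1 : ℕ) : ℝ) * q)) * c) + 2 ^ (k + 2)) *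
        ENNReal.ofReal ((lam * 2 ^ (1 - (k : ℝ))) ^ p)
      ≤ (2 * c + 1) * ENNReal.ofReal (2 ^ (p + q + 1 + k * (q - p)) * lam ^ p) := by
  have hpow : (2 : ℝ≥0∞) ^ (k + 2) = ENNReal.ofReal (2 ^ ((k + 2 : ℕ) : ℝ)) := by
    rw [Real.rpow_natCast, ENNReal.ofReal_pow zero_le_two, ENNReal.ofReal_ofNat]
  have hk : (0 : ℝ) ≤ k * (q - 1) := mul_nonneg k.cast_nonneg (sub_nonneg.2 hq)
  calc _ = 2 * c * ENNReal.ofReal (2 ^ (((k + 1 : ℕ) : ℝ) * q) * (lam * 2 ^ (1 - (k : ℝ))) ^ p)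
        + ENNReal.ofReal (2 ^ ((k + 2 : ℕ) : ℝ) * (lam * 2 ^ (1 - (k : ℝ))) ^ p) := by
        rw [hpow, ENNReal.ofReal_mul (by positivity), ENNReal.ofReal_mul (by positivity)]; ring
    _ ≤ _ := by
        rw [add_one_mul]
        gcongr 2 * c * ENNReal.ofReal ?_ + ENNReal.ofReal ?_ <;>
          refine two_rpow_mul_dyadic_rpow_le k hlam ?_ <;> push_cast <;> linarith

theorem tsum_ofReal_two_rpow {s r : ℝ} (hr : r < 0) :
    ∑' k : ℕ, ENNReal.ofReal (2 ^ (s + k * r)) = ENNReal.ofReal (2 ^ s / (1 - 2 ^ r)) := by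
  have hr₀ : (0 : ℝ) ≤ 2 ^ r := by positivity
  have hr₁ : (2 : ℝ) ^ r < 1 := Real.rpow_lt_one_of_one_lt_of_neg one_lt_two hr
  have hterm (k : ℕ) : (2 : ℝ) ^ (s + k * r) = 2 ^ s * (2 ^ r) ^ k := by
    rw [Real.rpow_add two_pos, mul_comm (k : ℝ), Real.rpow_mul_natCast zero_le_two]
  simp_rw [hterm]
  rw [← ENNReal.ofReal_tsum_of_nonneg (fun k => by positivity)
    ((summable_geometric_of_lt_one hr₀ hr₁).mul_left _), tsum_mul_left,
    tsum_geometric_of_lt_one hr₀ hr₁, div_eq_mul_inv]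

theorem le_ofReal_two_rpow_mul_iSup (g : ℕ → ℝ≥0∞) (q : ℝ) (k : ℕ) :
    g k ≤ ENNReal.ofReal (2 ^ ((k : ℝ) * q)) *
      ⨆ j : ℕ, ENNReal.ofReal (2 ^ (-(j : ℝ) * q)) * g j := by
  have hone : ENNReal.ofReal (2 ^ ((k : ℝ) * q)) * ENNReal.ofReal (2 ^ (-(k : ℝ) * q)) = 1 := by
    rw [← ENNReal.ofReal_mul (by positivity), ← Real.rpow_add two_pos, neg_mul, add_neg_cancel,
      Real.rpow_zero, ENNReal.ofReal_one]
  calc g k = ENNReal.ofReal (2 ^ ((k : ℝ) * q)) * (ENNReal.ofReal (2 ^ (-(k : ℝ) * q)) * g k) := by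
        rw [← mul_assoc, hone, one_mul]
    _ ≤ _ := by gcongr; exact le_iSup (fun j : ℕ => ENNReal.ofReal (2 ^ (-(j : ℝ) * q)) * g j) k

end Dyadic

theorem exists_cell_between {δ lo m M : ℝ} (hδ : 0 < δ) (P : ℕ) (hm : lo ≤ m)
    (hM : M ≤ lo + P * δ) (hmM : m + 2 * δ < M) :
    ∃ j ∈ Ioo ⌊lo / δ⌋ (⌊lo / δ⌋ + P), m < j * δ ∧ (j + 1) * δ < M := by
  have hj₁ : m / δ < ⌊m / δ⌋ + 1 := Int.lt_floor_add_one _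
  have hj₂ : (⌊m / δ⌋ + 1 + 1 : ℝ) < M / δ := by
    rw [lt_div_iff₀ hδ]
    nlinarith [Int.floor_le (m / δ), div_mul_cancel₀ m hδ.ne']
  refine ⟨⌊m / δ⌋ + 1, mem_Ioo.2 ⟨?_, ?_⟩, ?_, ?_⟩
  · have : ⌊lo / δ⌋ ≤ ⌊m / δ⌋ := Int.floor_mono (by gcongr)
    omega
  · have : M / δ ≤ lo / δ + P := by rw [div_le_iff₀ hδ]; linarith [div_mul_cancel₀ lo hδ.ne']
    have : ((⌊m / δ⌋ + 1 : ℤ) : ℝ) < ⌊lo / δ⌋ + P := by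
      push_cast; linarith [Int.lt_floor_add_one (lo / δ)]
    exact_mod_cast this
  · push_cast; rwa [← div_lt_iff₀ hδ]
  · push_cast; rwa [← lt_div_iff₀ hδ]

theorem le_upcross {f : ℝ → ℝ} {a b t : ℝ} {m : ℕ} (u v : Fin m → ℝ)
    (huv : ∀ i, 0 ≤ u i ∧ u i < v i ∧ v i ≤ t) (hvu : ∀ i j : Fin m, i < j → v i < u j)
    (hf : ∀ i, f (u i) < a ∧ b < f (v i)) :
    (m : ℝ≥0∞) ≤ upcross f a b t :=
  le_iSup_of_le m <| le_iSup_of_le u <| le_iSup_of_le v <| le_iSup_of_le ⟨huv, hvu, hf⟩ le_rfl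

theorem Finset.orderEmbOfFin_add_one_lt {α : Type*} {n : ℕ} {s : Finset (Fin n)}
    {v : Fin (n + 1) → α} {A : Set α} (hA : ∀ i ∈ s, v i.castSucc ∈ A ∧ v i.succ ∉ A)
    {i j : Fin #s} (hij : i < j) :
    (s.orderEmbOfFin rfl i : ℕ) + 1 < s.orderEmbOfFin rfl j := by
  set e := s.orderEmbOfFin rfl
  have hlt : (e i : ℕ) < e j := e.strictMono hij
  have hne : (e i : ℕ) + 1 ≠ e j := fun h => by
    have hv : v (e i).succ = v (e j).castSucc := by
      rw [show (e i).succ = (e j).castSucc from Fin.ext (by simpa using h)]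
    exact (hA _ (s.orderEmbOfFin_mem rfl i)).2 (hv ▸ (hA _ (s.orderEmbOfFin_mem rfl j)).1)
  omega

section Partition

variable {f : ℝ → ℝ} {t : ℝ} {n : ℕ} {x : Fin (n + 1) → ℝ}

theorem card_upSteps_le_upcross {a b : ℝ} (hx : StrictMono x) (hxt : ∀ i, x i ∈ Set.Icc 0 t)
    (hab : a ≤ b) :
    (#{i : Fin n | f (x i.castSucc) < a ∧ b < f (x i.succ)} : ℝ≥0∞) ≤ upcross f a b t := by
  set s := ({i : Fin n | f (x i.castSucc) < a ∧ b < f (x i.succ)} : Finset (Fin n))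
  have hs : ∀ i ∈ s, f (x i.castSucc) < a ∧ b < f (x i.succ) := fun i hi => (mem_filter.1 hi).2
  have hA : ∀ i ∈ s, f (x i.castSucc) ∈ Set.Iio a ∧ f (x i.succ) ∉ Set.Iio a :=
    fun i hi => ⟨(hs i hi).1, not_lt.2 (hab.trans (hs i hi).2.le)⟩
  let e := s.orderEmbOfFin rfl
  refine le_upcross (fun k => x (e k).castSucc) (fun k => x (e k).succ)
    (fun k => ⟨(hxt _).1, hx Fin.castSucc_lt_succ, (hxt _).2⟩)
    (fun k l hkl => hx (Fin.lt_def.2 ?_)) (fun k => hs _ (s.orderEmbOfFin_mem rfl k))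
  simpa using Finset.orderEmbOfFin_add_one_lt (v := f ∘ x) hA hkl

theorem card_downSteps_le_upcross_add_one {a b : ℝ} (hx : StrictMono x)
    (hxt : ∀ i, x i ∈ Set.Icc 0 t) (hab : a ≤ b) :
    (#{i : Fin n | b < f (x i.castSucc) ∧ f (x i.succ) < a} : ℝ≥0∞) ≤ upcross f a b t + 1 := by
  set s := ({i : Fin n | b < f (x i.castSucc) ∧ f (x i.succ) < a} : Finset (Fin n))
  have hs : ∀ i ∈ s, b < f (x i.castSucc) ∧ f (x i.succ) < a := fun i hi => (mem_filter.1 hi).2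
  have hA : ∀ i ∈ s, f (x i.castSucc) ∈ Set.Ioi b ∧ f (x i.succ) ∉ Set.Ioi b :=
    fun i hi => ⟨(hs i hi).1, not_lt.2 ((hs i hi).2.le.trans hab)⟩
  let e := s.orderEmbOfFin rfl
  -- between two consecutive downward steps `f` crosses `(a, b)` upwards
  have hup : ((#s - 1 : ℕ) : ℝ≥0∞) ≤ upcross f a b t := by
    refine le_upcross (fun k => x (e ⟨k, by omega⟩).succ)
      (fun k => x (e ⟨k + 1, by omega⟩).castSucc)
      (fun k => ⟨(hxt _).1, hx (Fin.lt_def.2 ?_), (hxt _).2⟩) (fun k l hkl => hx (Fin.lt_def.2 ?_))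
      (fun k => ⟨(hs _ (s.orderEmbOfFin_mem rfl _)).2, (hs _ (s.orderEmbOfFin_mem rfl _)).1⟩)
    · simpa using Finset.orderEmbOfFin_add_one_lt (v := f ∘ x) hA (i := ⟨k, by omega⟩)
        (j := ⟨k + 1, by omega⟩) (Fin.lt_def.2 (Nat.lt_succ_self _))
    · have : (e ⟨k + 1, by omega⟩ : ℕ) ≤ e ⟨l, by omega⟩ :=
        (s.orderEmbOfFin rfl).monotone (Fin.le_def.2 (by simp only; omega))
      simp only [Fin.val_castSucc, Fin.val_succ]
      omega
  calc (#s : ℝ≥0∞) ≤ ((#s - 1 : ℕ) : ℝ≥0∞) + 1 := by norm_cast; omega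
    _ ≤ upcross f a b t + 1 := by gcongr

theorem card_largeSteps_le (hx : StrictMono x) (hxt : ∀ i, x i ∈ Set.Icc 0 t) {δ lo : ℝ}
    (hδ : 0 < δ) (P : ℕ) (hf : ∀ i, f (x i) ∈ Set.Icc lo (lo + P * δ)) :
    (#{i : Fin n | 2 * δ < |f (x i.succ) - f (x i.castSucc)|} : ℝ≥0∞)
      ≤ 2 * gridUpcross f δ t + P := by
  set J := Ioo ⌊lo / δ⌋ (⌊lo / δ⌋ + P)
  let up (j : ℤ) : Finset (Fin n) := {i | f (x i.castSucc) < j * δ ∧ (j + 1) * δ < f (x i.succ)}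
  let down (j : ℤ) : Finset (Fin n) :=
    {i | (j + 1) * δ < f (x i.castSucc) ∧ f (x i.succ) < j * δ}
  have hcover : ({i : Fin n | 2 * δ < |f (x i.succ) - f (x i.castSucc)|} : Finset (Fin n))
      ⊆ J.biUnion fun j => up j ∪ down j := by
    intro i hi
    have hgap : min (f (x i.castSucc)) (f (x i.succ)) + 2 * δ
        < max (f (x i.castSucc)) (f (x i.succ)) := by
      linarith [(mem_filter.1 hi).2, max_sub_min_eq_abs (f (x i.castSucc)) (f (x i.succ)),
        max_sub_min_eq_abs' (f (x i.castSucc)) (f (x i.succ))]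
    obtain ⟨j, hjJ, hj⟩ := exists_cell_between hδ P
      (le_min (hf _).1 (hf _).1) (max_le (hf _).2 (hf _).2) hgap
    refine mem_biUnion.2 ⟨j, hjJ, ?_⟩
    rcases le_total (f (x i.castSucc)) (f (x i.succ)) with hle | hle
    · rw [min_eq_left hle, max_eq_right hle] at hj
      exact mem_union_left _ (mem_filter.2 ⟨mem_univ _, hj⟩)
    · rw [min_eq_right hle, max_eq_left hle] at hj
      exact mem_union_right _ (mem_filter.2 ⟨mem_univ _, hj.2, hj.1⟩)
  have hJ : (#J : ℝ≥0∞) ≤ P := by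
    rw [Int.card_Ioo]; norm_cast; omega
  have hcell (j : ℤ) : (j : ℝ) * δ ≤ (j + 1) * δ := by nlinarith
  calc (#{i : Fin n | 2 * δ < |f (x i.succ) - f (x i.castSucc)|} : ℝ≥0∞)
      ≤ ∑ j ∈ J, ((#(up j) : ℝ≥0∞) + #(down j)) := by
        refine (Nat.cast_le.2 (card_le_card hcover)).trans ?_
        exact_mod_cast (card_biUnion_le).trans (sum_le_sum fun j _ => card_union_le _ _)
    _ ≤ ∑ j ∈ J, (2 * upcross f (j * δ) ((j + 1) * δ) t + 1) := by
        refine sum_le_sum fun j _ => ?_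
        rw [two_mul, add_assoc]
        exact add_le_add (card_upSteps_le_upcross hx hxt (hcell j))
          (card_downSteps_le_upcross_add_one hx hxt (hcell j))
    _ ≤ 2 * gridUpcross f δ t + P := by
        rw [sum_add_distrib, ← mul_sum, sum_const, nsmul_one]
        gcongr
        exact ENNReal.sum_le_tsum J

theorem card_steps_gt_dyadic_le (hx : StrictMono x) (hxt : ∀ i, x i ∈ Set.Icc 0 t) {y lam : ℝ}
    (hlam : 0 < lam) (hf : ∀ i, |f (x i) - y| ≤ lam) (k : ℕ) :
    (#{i : Fin n | lam * 2 ^ (-(k : ℝ)) < |f (x i.succ) - f (x i.castSucc)|} : ℝ≥0∞)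
      ≤ 2 * gridUpcross f (lam * 2 ^ (-((k + 1 : ℕ) : ℝ))) t + 2 ^ (k + 2) := by
  set δ := lam * (2 : ℝ) ^ (-((k + 1 : ℕ) : ℝ))
  have hδ : 0 < δ := by positivity
  have h2δ : 2 * δ = lam * 2 ^ (-(k : ℝ)) := by
    simp only [δ, two_rpow_neg_natCast, pow_succ]; field_simp
  have hPδ : ((2 ^ (k + 2) : ℕ) : ℝ) * δ = 2 * lam := by
    simp only [δ, two_rpow_neg_natCast, pow_succ]; push_cast; field_simp
  have hrange (i : Fin (n + 1)) :
      f (x i) ∈ Set.Icc (y - lam) (y - lam + (2 ^ (k + 2) : ℕ) * δ) := by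
    rw [hPδ]; constructor <;> linarith [abs_le.1 (hf i)]
  have := card_largeSteps_le hx hxt hδ (2 ^ (k + 2)) hrange
  rw [h2δ] at this
  exact_mod_cast this

theorem sum_rpow_steps_le (hx : StrictMono x) (hxt : ∀ i, x i ∈ Set.Icc 0 t) {y lam p q : ℝ}
    (hf : ∀ i, |f (x i) - y| ≤ lam) (hq : 1 ≤ q) (hqp : q < p) :
    ∑ i : Fin n, ENNReal.ofReal (|f (x i.succ) - f (x i.castSucc)| ^ p) ≤
      ENNReal.ofReal ((2 : ℝ) ^ (p + q + 1) / (1 - (2 : ℝ) ^ (q - p))) *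
        (2 * (⨆ k : ℕ, ENNReal.ofReal ((2 : ℝ) ^ (-(k : ℝ) * q)) *
            gridUpcross f (lam * (2 : ℝ) ^ (-(k : ℝ))) t) + 1) *
        ENNReal.ofReal (lam ^ p) := by
  set c := ⨆ k : ℕ, ENNReal.ofReal ((2 : ℝ) ^ (-(k : ℝ) * q)) *
    gridUpcross f (lam * (2 : ℝ) ^ (-(k : ℝ))) t
  have hp : 0 < p := by linarith
  have hstep (i : Fin n) : |f (x i.succ) - f (x i.castSucc)| ≤ 2 * lam := by
    linarith [abs_sub_le (f (x i.succ)) y (f (x i.castSucc)), abs_sub_comm y (f (x i.castSucc)),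
      hf i.succ, hf i.castSucc]
  rcases ((abs_nonneg _).trans (hf 0)).eq_or_lt with rfl | hlam
  · refine le_of_eq_of_le (sum_eq_zero fun i _ => ?_) zero_le
    rw [le_antisymm (by simpa using hstep i) (abs_nonneg _), Real.zero_rpow hp.ne',
      ENNReal.ofReal_zero]
  calc ∑ i : Fin n, ENNReal.ofReal (|f (x i.succ) - f (x i.castSucc)| ^ p)
      ≤ ∑' k : ℕ, #{i : Fin n | lam * 2 ^ (-(k : ℝ)) < |f (x i.succ) - f (x i.castSucc)|}
          * ENNReal.ofReal ((lam * 2 ^ (1 - (k : ℝ))) ^ p) :=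
        sum_ofReal_rpow_le_tsum_card_mul hp _ fun i => ⟨abs_nonneg _, hstep i⟩
    _ ≤ ∑' k : ℕ, (2 * (ENNReal.ofReal (2 ^ (((k + 1 : ℕ) : ℝ) * q)) * c) + 2 ^ (k + 2))
          * ENNReal.ofReal ((lam * 2 ^ (1 - (k : ℝ))) ^ p) := by
        refine ENNReal.tsum_le_tsum fun k => ?_
        gcongr
        refine (card_steps_gt_dyadic_le hx hxt hlam hf k).trans ?_
        gcongr
        exact le_ofReal_two_rpow_mul_iSup _ q (k + 1)
    _ ≤ ∑' k : ℕ, (2 * c + 1) * ENNReal.ofReal (2 ^ (p + q + 1 + k * (q - p)) * lam ^ p) :=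
        ENNReal.tsum_le_tsum fun k => dyadic_term_le hlam.le hq k
    _ = _ := by
        simp only [ENNReal.ofReal_mul (Real.rpow_nonneg zero_le_two _)]
        rw [ENNReal.tsum_mul_left, ENNReal.tsum_mul_right, tsum_ofReal_two_rpow (by linarith)]
        ring

end Partition

theorem stmt11_general (f : ℝ → ℝ) (t : ℝ)
    (p q : ℝ) (hq : 1 ≤ q) (hqp : q < p) (lam : ℝ)
    (hlam : ∀ s ∈ Set.Icc (0 : ℝ) t, |f s - f 0| ≤ lam) :
    pVar p f 0 t ≤
      ENNReal.ofReal ((2 : ℝ) ^ (p + q + 1) / (1 - (2 : ℝ) ^ (q - p))) *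
        (2 * (⨆ k : ℕ, ENNReal.ofReal ((2 : ℝ) ^ (-(k : ℝ) * q)) *
            gridUpcross f (lam * (2 : ℝ) ^ (-(k : ℝ))) t) + 1) *
        ENNReal.ofReal (lam ^ p) := by
  refine iSup_le fun n => iSup_le fun x => iSup_le fun ⟨hx, hx₀, hxt⟩ => ?_
  have hx_mem (i : Fin (n + 1)) : x i ∈ Set.Icc 0 t :=
    ⟨hx₀ ▸ hx.monotone (Fin.zero_le i), hxt ▸ hx.monotone (Fin.le_last i)⟩
  exact sum_rpow_steps_le hx hx_mem (fun i => hlam _ (hx_mem i)) hq hqp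

/-- Bruneau's lemma: for continuous `f`, `t ∈ (0,T]`, `1 ≤ q < p`
and `λ ≥ sup_{s∈[0,t]} |f(s) − f(0)|`,
`var_p(f,[0,t]) ≤ (2^{p+q+1}/(1 − 2^{q−p})) (2c + 1) λ^p`, where
`c = sup_k 2^{−kq} M_t(f, λ2^{−k})`. -/
theorem stmt11 (T : ℝ) (hT : 0 < T) (f : ℝ → ℝ)
    (hf : ContinuousOn f (Set.Icc 0 T)) (t : ℝ) (ht : t ∈ Set.Ioc (0 : ℝ) T)
    (p q : ℝ) (hq : 1 ≤ q) (hqp : q < p) (lam : ℝ)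
    (hlam : ∀ s ∈ Set.Icc (0 : ℝ) t, |f s - f 0| ≤ lam) :
    pVar p f 0 t ≤
      ENNReal.ofReal ((2 : ℝ) ^ (p + q + 1) / (1 - (2 : ℝ) ^ (q - p))) *
        (2 * (⨆ k : ℕ, ENNReal.ofReal ((2 : ℝ) ^ (-(k : ℝ) * q)) *
            gridUpcross f (lam * (2 : ℝ) ^ (-(k : ℝ))) t) + 1) *
        ENNReal.ofReal (lam ^ p) :=
  stmt11_general f t p q hq hqp lam hlam
end
end

section
/- If ω : [0,T] → ℝ is continuous, nonconstant, with ω(0) = 0, and sup_{t∈[0,T]}|ω(t)| = B > 0, then for every p ∈ (0,2) and every δ > 0 with A := B/2, the capital strategy betting 2ω(τₙ) at the successive δ-grid hitting times τₙ until ω first hits ±A turns an initial capital of δ^{2−p}·var_p(ω) + 2Aδ into at least A² at the hitting time of ±A, provided var_p(ω) < ∞. -/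
open scoped ENNReal

noncomputable section

lemma grid_sep {δ : ℝ} (hδ : 0 < δ) {x y : ℝ} (k m : ℤ) (hx : x = k * δ) (hy : y = m * δ)
    (hxy : x ≠ y) : δ ≤ |x - y| := by
  have hkm : k ≠ m := by rintro rfl; exact hxy (hx.trans hy.symm)
  have h1 : (1:ℝ) ≤ |(k:ℝ) - m| := by
    have := Int.one_le_abs (sub_ne_zero.mpr hkm)
    calc (1:ℝ) = ((1:ℤ):ℝ) := by norm_num
      _ ≤ ((|k - m| : ℤ) : ℝ) := by exact_mod_cast this
      _ = |(k:ℝ) - m| := by push_cast; ring_nf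
  calc δ = 1 * δ := (one_mul δ).symm
    _ ≤ |(k:ℝ) - m| * δ := by nlinarith
    _ = |x - y| := by rw [hx, hy, ← sub_mul, abs_mul, abs_of_pos hδ]

lemma gridTimes_le_succ (T δ : ℝ) (f : ℝ → ℝ) (n : ℕ) :
    gridTimes T δ f n ≤ gridTimes T δ f (n + 1) := by
  rw [gridTimes]
  apply le_sInf
  rintro s ⟨t, rfl, -, hlt, -⟩
  exact hlt.le

lemma gridTimes_mono (T δ : ℝ) (f : ℝ → ℝ) : Monotone (gridTimes T δ f) :=
  monotone_nat_of_le_succ (gridTimes_le_succ T δ f)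

lemma grid_no_cross {T δ : ℝ} {ω : ℝ → ℝ} (hω : ContinuousOn ω (Set.Icc 0 T))
    (hδ : 0 < δ) {n : ℕ} {a : ℝ} (ha : 0 ≤ a) (hk : ∃ k : ℤ, ω a = (k:ℝ) * δ)
    (hga : gridTimes T δ ω n = ENNReal.ofReal a)
    {t : ℝ} (hat : a < t) (htT : t ≤ T)
    (hle : ENNReal.ofReal t ≤ gridTimes T δ ω (n + 1)) :
    |ω t - ω a| ≤ δ := by
  by_contra h
  push_neg at h
  obtain ⟨k, hka⟩ := hk
  have hsub : Set.Icc a t ⊆ Set.Icc 0 T := Set.Icc_subset_Icc ha htT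
  have hcont : ContinuousOn ω (Set.Icc a t) := hω.mono hsub
  have key : ∃ s, a < s ∧ s < t ∧ (ω s = ω a + δ ∨ ω s = ω a - δ) := by
    rcases lt_abs.mp h with h1 | h1
    · obtain ⟨s, hs, hws⟩ := intermediate_value_Icc hat.le hcont
        (⟨by linarith, by linarith⟩ : ω a + δ ∈ Set.Icc (ω a) (ω t))
      refine ⟨s, ?_, ?_, Or.inl hws⟩
      · rcases eq_or_lt_of_le hs.1 with rfl | h2
        · exfalso; linarith [hws]
        · exact h2
      · rcases eq_or_lt_of_le hs.2 with rfl | h2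
        · exfalso; linarith [hws]
        · exact h2
    · obtain ⟨s, hs, hws⟩ := intermediate_value_Icc' hat.le hcont
        (⟨by linarith, by linarith⟩ : ω a - δ ∈ Set.Icc (ω t) (ω a))
      refine ⟨s, ?_, ?_, Or.inr hws⟩
      · rcases eq_or_lt_of_le hs.1 with rfl | h2
        · exfalso; linarith [hws]
        · exact h2
      · rcases eq_or_lt_of_le hs.2 with rfl | h2
        · exfalso; linarith [hws]
        · exact h2
  obtain ⟨s, has, hst, hws⟩ := key
  have hsmem : ENNReal.ofReal s ∈ {u : ℝ≥0∞ | ∃ t : ℝ, u = ENNReal.ofReal t ∧ t ≤ T ∧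
      gridTimes T δ ω n < ENNReal.ofReal t ∧ (∃ k : ℤ, ω t = (k : ℝ) * δ) ∧
      ω t ≠ ω ((gridTimes T δ ω n).toReal)} := by
    refine ⟨s, rfl, by linarith, ?_, ?_, ?_⟩
    · rw [hga]
      exact (ENNReal.ofReal_lt_ofReal_iff_of_nonneg ha).mpr has
    · rcases hws with hws | hws
      · exact ⟨k + 1, by rw [hws, hka]; push_cast; ring⟩
      · exact ⟨k - 1, by rw [hws, hka]; push_cast; ring⟩
    · rw [hga, ENNReal.toReal_ofReal ha]
      rcases hws with hws | hws <;> rw [hws] <;> intro hc <;> linarith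
  have h2 : gridTimes T δ ω (n + 1) ≤ ENNReal.ofReal s := by
    rw [gridTimes]; exact sInf_le hsmem
  have h3 : ENNReal.ofReal s < ENNReal.ofReal t :=
    (ENNReal.ofReal_lt_ofReal_iff (lt_of_le_of_lt ha hat)).mpr hst
  exact absurd (lt_of_le_of_lt (hle.trans h2) h3) (lt_irrefl _)

lemma grid_next {T δ : ℝ} {ω : ℝ → ℝ} (hω : ContinuousOn ω (Set.Icc 0 T))
    (hδ : 0 < δ) {n : ℕ} {a : ℝ} (ha : 0 ≤ a) (haT : a ≤ T)
    (hk : ∃ k : ℤ, ω a = (k:ℝ) * δ)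
    (hga : gridTimes T δ ω n = ENNReal.ofReal a)
    (hfin : gridTimes T δ ω (n + 1) ≠ ⊤) :
    ∃ b, gridTimes T δ ω (n + 1) = ENNReal.ofReal b ∧ a < b ∧ b ≤ T ∧
      (∃ k : ℤ, ω b = (k:ℝ) * δ) ∧ |ω b - ω a| = δ := by
  obtain ⟨k0, hk0⟩ := hk
  set S : Set ℝ := {t | a < t ∧ t ≤ T ∧ (∃ k : ℤ, ω t = (k:ℝ) * δ) ∧ ω t ≠ ω a} with hS
  have hset : {s : ℝ≥0∞ | ∃ t : ℝ, s = ENNReal.ofReal t ∧ t ≤ T ∧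
      gridTimes T δ ω n < ENNReal.ofReal t ∧ (∃ k : ℤ, ω t = (k : ℝ) * δ) ∧
      ω t ≠ ω ((gridTimes T δ ω n).toReal)} = ENNReal.ofReal '' S := by
    ext s
    constructor
    · rintro ⟨t, rfl, htT, hlt, hkt, hne⟩
      rw [hga] at hlt hne
      rw [ENNReal.toReal_ofReal ha] at hne
      exact ⟨t, ⟨(ENNReal.ofReal_lt_ofReal_iff_of_nonneg ha).mp hlt, htT, hkt, hne⟩, rfl⟩
    · rintro ⟨t, ⟨hat, htT, hkt, hne⟩, rfl⟩
      refine ⟨t, rfl, htT, ?_, hkt, ?_⟩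
      · rw [hga]; exact (ENNReal.ofReal_lt_ofReal_iff_of_nonneg ha).mpr hat
      · rw [hga, ENNReal.toReal_ofReal ha]; exact hne
  have hgeq : gridTimes T δ ω (n + 1) = sInf (ENNReal.ofReal '' S) := by
    rw [gridTimes, hset]
  have hSne : S.Nonempty := by
    by_contra hemp
    rw [Set.not_nonempty_iff_eq_empty] at hemp
    rw [hgeq, hemp, Set.image_empty, sInf_empty] at hfin
    exact hfin rfl
  have hbdd : BddBelow S := ⟨a, fun t ht => ht.1.le⟩
  set b := sInf S with hb
  have hab : a ≤ b := le_csInf hSne (fun t ht => ht.1.le)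
  have hbT : b ≤ T := by
    obtain ⟨t0, ht0⟩ := hSne
    exact (csInf_le hbdd ht0).trans ht0.2.1
  have hbmem : b ∈ Set.Icc (0:ℝ) T := ⟨ha.trans hab, hbT⟩
  have hcb : ContinuousWithinAt ω (Set.Icc 0 T) b := hω b hbmem
  rw [Metric.continuousWithinAt_iff] at hcb
  have approx : ∀ ε > (0:ℝ), ∃ t ∈ S, |ω t - ω b| < ε ∧ (∃ k : ℤ, ω t = (k:ℝ) * δ) ∧ ω t ≠ ω a := by
    intro ε hε
    obtain ⟨η, hη, hball⟩ := hcb ε hε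
    obtain ⟨t, htS, htlt⟩ := (csInf_lt_iff hbdd hSne).mp (by rw [← hb]; linarith : sInf S < b + η)
    have htb : b ≤ t := csInf_le hbdd htS
    have htmem : t ∈ Set.Icc (0:ℝ) T := ⟨ha.trans (hab.trans htb), htS.2.1⟩
    have hdist : dist t b < η := by
      rw [Real.dist_eq, abs_of_nonneg (by linarith)]
      linarith
    have := hball htmem hdist
    rw [Real.dist_eq] at this
    exact ⟨t, htS, this, htS.2.2.1, htS.2.2.2⟩
  obtain ⟨t₁, ht₁S, ht₁close, ⟨k₁, hk₁⟩, hne₁⟩ := approx (δ/2) (by linarith)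
  have hωb : ω b = ω t₁ := by
    by_contra hne2
    have hpos : 0 < |ω t₁ - ω b| := by
      rw [abs_pos, sub_ne_zero]; exact fun hc => hne2 hc.symm
    obtain ⟨t₂, ht₂S, ht₂close, ⟨k₂, hk₂⟩, hne₂⟩ :=
      approx (min (|ω t₁ - ω b|) (δ/2)) (lt_min hpos (by linarith))
    have h12 : |ω t₂ - ω t₁| < δ := by
      have h1 := lt_of_lt_of_le ht₂close (min_le_right _ _)
      calc |ω t₂ - ω t₁| ≤ |ω t₂ - ω b| + |ω b - ω t₁| := abs_sub_le _ _ _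
        _ < δ/2 + δ/2 := by rw [abs_sub_comm (ω b)]; linarith
        _ = δ := by ring
    have heq : ω t₂ = ω t₁ := by
      by_contra hc
      exact absurd h12 (not_lt.mpr (grid_sep hδ k₂ k₁ hk₂ hk₁ hc))
    rw [heq] at ht₂close
    exact absurd (lt_of_lt_of_le ht₂close (min_le_left _ _)) (lt_irrefl _)
  have hωbk : ∃ k : ℤ, ω b = (k:ℝ) * δ := ⟨k₁, hωb.trans hk₁⟩
  have hωbne : ω b ≠ ω a := by rw [hωb]; exact hne₁
  have hsep : δ ≤ |ω b - ω a| := grid_sep hδ k₁ k0 (hωb.trans hk₁) hk0 hωbne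
  have habs : a < b := by
    rcases eq_or_lt_of_le hab with heq | h2
    · exfalso; rw [← heq, sub_self, abs_zero] at hsep; linarith
    · exact h2
  have hbS : b ∈ S := ⟨habs, hbT, hωbk, hωbne⟩
  have heqb : gridTimes T δ ω (n + 1) = ENNReal.ofReal b := by
    rw [hgeq]
    apply le_antisymm
    · exact sInf_le ⟨b, hbS, rfl⟩
    · apply le_sInf
      rintro s ⟨t, htS, rfl⟩
      exact ENNReal.ofReal_le_ofReal (csInf_le hbdd htS)
  refine ⟨b, heqb, habs, hbT, hωbk, le_antisymm ?_ hsep⟩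
  exact grid_no_cross hω hδ ha ⟨k0, hk0⟩ hga habs hbT (le_of_eq heqb.symm)

lemma pVar_ge {p T : ℝ} {ω : ℝ → ℝ} {m : ℕ} (u : Fin (m+1) → ℝ)
    (hu : StrictMono u ∧ u 0 = 0 ∧ u (Fin.last m) = T) :
    ∑ i : Fin m, ENNReal.ofReal (|ω (u i.succ) - ω (u i.castSucc)| ^ p) ≤ pVar p ω 0 T := by
  unfold pVar
  refine le_iSup_of_le m (le_iSup_of_le u ?_)
  exact le_iSup (fun _ : StrictMono u ∧ u 0 = 0 ∧ u (Fin.last m) = T =>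
    ∑ i : Fin m, ENNReal.ofReal (|ω (u i.succ) - ω (u i.castSucc)| ^ p)) hu

/-- the grid strategy betting `2ω(τₙ)` until `|ω|` first hits
`A = B/2` turns initial capital `δ^{2−p}·var_p(ω) + 2Aδ` into at least `A²`
at the hitting time of `±A`, provided `var_p(ω) < ∞`. -/
theorem stmt18 (T p δ B : ℝ) (hT : 0 < T) (hp : 0 < p) (hp2 : p < 2)
    (hδ : 0 < δ) (hB : 0 < B) (ω : ℝ → ℝ)
    (hω : ContinuousOn ω (Set.Icc 0 T)) (h0 : ω 0 = 0)
    (hsup : IsGreatest {x : ℝ | ∃ t ∈ Set.Icc (0 : ℝ) T, x = |ω t|} B)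
    (hvar : pVar p ω 0 T < ⊤) :
    letI A : ℝ := B / 2
    letI TA : ℝ≥0∞ :=
      sInf {s : ℝ≥0∞ | ∃ t ∈ Set.Icc (0 : ℝ) T, s = ENNReal.ofReal t ∧ |ω t| = A}
    letI c : ℝ := δ ^ (2 - p) * (pVar p ω 0 T).toReal + 2 * A * δ
    A ^ 2 ≤ c + ∑' n : ℕ,
      (if gridTimes T δ ω n < TA then 2 * ω ((gridTimes T δ ω n).toReal) else 0) *
        (ω ((gridTimes T δ ω (n + 1) ⊓ TA).toReal) - ω ((gridTimes T δ ω n ⊓ TA).toReal)) := by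
  set A : ℝ := B / 2 with hAdef
  set TA : ℝ≥0∞ := sInf {s : ℝ≥0∞ | ∃ t ∈ Set.Icc (0:ℝ) T, s = ENNReal.ofReal t ∧ |ω t| = A}
    with hTAdef
  set V : ℝ := (pVar p ω 0 T).toReal with hVdef
  set g : ℕ → ℝ≥0∞ := gridTimes T δ ω with hgdef
  have hA0 : 0 < A := by rw [hAdef]; linarith
  obtain ⟨tstar, htsm, htseq⟩ := hsup.1
  have habscont : ContinuousOn (fun t => |ω t|) (Set.Icc 0 T) := hω.abs
  set K : Set ℝ := Set.Icc 0 T ∩ (fun t => |ω t|) ⁻¹' {A} with hKdef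
  have hKne : K.Nonempty := by
    obtain ⟨s, hs, hws⟩ := intermediate_value_Icc htsm.1
      (habscont.mono (Set.Icc_subset_Icc_right htsm.2))
      (⟨by rw [h0, abs_zero]; exact hA0.le, by rw [← htseq]; linarith⟩ :
        A ∈ Set.Icc (|ω 0|) (|ω tstar|))
    exact ⟨s, ⟨Set.Icc_subset_Icc_right htsm.2 hs, hws⟩⟩
  have hKcl : IsClosed K := habscont.preimage_isClosed_of_isClosed isClosed_Icc isClosed_singleton
  have hKbdd : BddBelow K := ⟨0, fun x hx => hx.1.1⟩
  set tA : ℝ := sInf K with htAdef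
  have htAK : tA ∈ K := hKcl.csInf_mem hKne hKbdd
  have htA_abs : |ω tA| = A := htAK.2
  have htA0 : 0 ≤ tA := htAK.1.1
  have htAT : tA ≤ T := htAK.1.2
  have htApos : 0 < tA := by
    rcases eq_or_lt_of_le htA0 with heq | h
    · exfalso
      have : |ω tA| = 0 := by rw [← heq, h0, abs_zero]
      rw [htA_abs] at this; linarith
    · exact h
  have hTA : TA = ENNReal.ofReal tA := by
    rw [hTAdef]
    apply le_antisymm
    · exact sInf_le ⟨tA, ⟨htA0, htAT⟩, rfl, htA_abs⟩
    · apply le_sInf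
      rintro s ⟨t, htm, rfl, habst⟩
      exact ENNReal.ofReal_le_ofReal (csInf_le hKbdd ⟨htm, habst⟩)
  have hTAtop : TA ≠ ⊤ := by rw [hTA]; exact ENNReal.ofReal_ne_top
  have habove : ∀ t, 0 ≤ t → t ≤ tA → |ω t| ≤ A := by
    intro t ht0 httA
    by_contra hc
    push_neg at hc
    obtain ⟨s, hs, hws⟩ := intermediate_value_Icc ht0
      (habscont.mono (Set.Icc_subset_Icc_right (httA.trans htAT)))
      (⟨by rw [h0, abs_zero]; exact hA0.le, by linarith⟩ :
        A ∈ Set.Icc (|ω 0|) (|ω t|))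
    have hsK : s ∈ K := ⟨⟨hs.1, hs.2.trans (httA.trans htAT)⟩, hws⟩
    have : tA ≤ s := csInf_le hKbdd hsK
    have hst : s = t := le_antisymm hs.2 (httA.trans this)
    rw [hst] at hws
    simp only at hws
    rw [hws] at hc; exact lt_irrefl _ hc
  have hg0 : g 0 = 0 := rfl
  have hgmono : Monotone g := gridTimes_mono T δ ω
  -- data about grid times
  have hdata : ∀ n, g n ≠ ⊤ → (0 ≤ (g n).toReal ∧ (g n).toReal ≤ T ∧
      g n = ENNReal.ofReal ((g n).toReal) ∧ ∃ k : ℤ, ω ((g n).toReal) = (k:ℝ) * δ) := by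
    intro n
    induction n with
    | zero =>
      intro _
      refine ⟨le_refl (0:ℝ) |>.trans (by rw [hg0]; simp), hT.le.trans_eq' (by rw [hg0]; simp), ?_, ⟨0, by rw [hg0]; simp [h0]⟩⟩
      rw [hg0]; simp
    | succ n ih =>
      intro hfin
      have hfn : g n ≠ ⊤ := by
        intro hc
        exact hfin (top_le_iff.mp (hc ▸ hgmono (Nat.le_succ n)))
      obtain ⟨h1, h2, h3, h4⟩ := ih hfn
      obtain ⟨b, hb, hab, hbT, hkb, hinc⟩ := grid_next hω hδ h1 h2 h4 h3 hfin
      rw [← hgdef] at hb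
      have hbr : (g (n+1)).toReal = b := by rw [hb, ENNReal.toReal_ofReal (h1.trans hab.le)]
      rw [hbr]
      exact ⟨h1.trans hab.le, hbT, by rw [hb], hkb⟩
  have hstep : ∀ n, g (n+1) ≠ ⊤ →
      ((g n).toReal < (g (n+1)).toReal ∧ |ω ((g (n+1)).toReal) - ω ((g n).toReal)| = δ) := by
    intro n hfin
    have hfn : g n ≠ ⊤ := by
      intro hc
      exact hfin (top_le_iff.mp (hc ▸ hgmono (Nat.le_succ n)))
    obtain ⟨h1, h2, h3, h4⟩ := hdata n hfn
    obtain ⟨b, hb, hab, hbT, hkb, hinc⟩ := grid_next hω hδ h1 h2 h4 h3 hfin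
    rw [← hgdef] at hb
    have hbr : (g (n+1)).toReal = b := by rw [hb, ENNReal.toReal_ofReal (h1.trans hab.le)]
    rw [hbr]
    exact ⟨hab, hinc⟩
  -- variation bound
  have hvarN : ∀ n, g n < TA → (n : ℝ) * δ ^ p ≤ V := by
    intro n hn
    have hfin : ∀ i, i ≤ n → g i ≠ ⊤ := fun i hi => ne_top_of_lt (lt_of_le_of_lt (hgmono hi) hn)
    have hlt : ∀ i, i ≤ n → (g i).toReal < tA := by
      intro i hi
      have h1 := lt_of_le_of_lt (hgmono hi) hn
      rw [hTA] at h1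
      exact (ENNReal.lt_ofReal_iff_toReal_lt (hfin i hi)).mp h1
    set u : Fin (n+2) → ℝ := fun i => if (i:ℕ) ≤ n then (g (i:ℕ)).toReal else T with hudef
    have hu : ∀ j : Fin (n+2), u j = if (j:ℕ) ≤ n then (g (j:ℕ)).toReal else T := fun j => rfl
    have hu0 : u 0 = 0 := by
      rw [hu 0]
      have : ((0 : Fin (n+2)) : ℕ) = 0 := rfl
      rw [this, if_pos (Nat.zero_le n), hg0]
      simp
    have hulast : u (Fin.last (n+1)) = T := by
      rw [hu]
      have : ((Fin.last (n+1)) : ℕ) = n + 1 := rfl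
      rw [this, if_neg (by omega)]
    have humono : StrictMono u := by
      rw [Fin.strictMono_iff_lt_succ]
      intro i
      have hile : (i : ℕ) ≤ n := Nat.lt_succ_iff.mp i.isLt
      rw [hu i.castSucc, hu i.succ, Fin.coe_castSucc, Fin.val_succ, if_pos hile]
      by_cases hcase : (i : ℕ) + 1 ≤ n
      · rw [if_pos hcase]
        exact (hstep (i:ℕ) (hfin _ hcase)).1
      · rw [if_neg hcase]
        exact lt_of_lt_of_le (hlt _ hile) htAT
    have hsum := pVar_ge (p := p) (ω := ω) u ⟨humono, hu0, hulast⟩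
    rw [Fin.sum_univ_castSucc] at hsum
    have hterm : ∀ i : Fin n,
        ENNReal.ofReal (|ω (u (i.castSucc).succ) - ω (u (i.castSucc).castSucc)| ^ p)
          = ENNReal.ofReal (δ ^ p) := by
      intro i
      have hin : (i : ℕ) + 1 ≤ n := i.isLt
      have e1 : u (i.castSucc).castSucc = (g (i:ℕ)).toReal := by
        rw [hu, Fin.coe_castSucc, Fin.coe_castSucc, if_pos (by omega : (i:ℕ) ≤ n)]
      have e2 : u (i.castSucc).succ = (g ((i:ℕ)+1)).toReal := by
        rw [hu, Fin.val_succ, Fin.coe_castSucc, if_pos hin]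
      rw [e1, e2, (hstep (i:ℕ) (hfin _ hin)).2]
    have hkey : (n : ℝ≥0∞) * ENNReal.ofReal (δ ^ p) ≤ pVar p ω 0 T := by
      calc (n : ℝ≥0∞) * ENNReal.ofReal (δ ^ p)
          = ∑ _i : Fin n, ENNReal.ofReal (δ ^ p) := by
            rw [Finset.sum_const, Finset.card_univ, Fintype.card_fin, nsmul_eq_mul]
        _ = ∑ i : Fin n,
              ENNReal.ofReal (|ω (u (i.castSucc).succ) - ω (u (i.castSucc).castSucc)| ^ p) := by
            exact Finset.sum_congr rfl (fun i _ => (hterm i).symm)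
        _ ≤ _ := le_self_add
        _ ≤ pVar p ω 0 T := hsum
    have h2 := ENNReal.toReal_mono hvar.ne hkey
    rw [ENNReal.toReal_mul, ENNReal.toReal_natCast,
      ENNReal.toReal_ofReal (Real.rpow_nonneg hδ.le p)] at h2
    exact h2
  -- the last index before TA
  have h0S : g 0 < TA := by rw [hg0, hTA]; exact ENNReal.ofReal_pos.mpr htApos
  have hbddS : BddAbove {n : ℕ | g n < TA} := by
    refine ⟨Nat.ceil (V / δ ^ p), fun n hn => ?_⟩
    have h1 := hvarN n hn
    have hδp : (0:ℝ) < δ ^ p := Real.rpow_pos_of_pos hδ p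
    have h2 : (n:ℝ) ≤ V / δ ^ p := (le_div_iff₀ hδp).mpr h1
    have h3 : (n:ℝ) ≤ (Nat.ceil (V / δ ^ p) : ℝ) := h2.trans (Nat.le_ceil _)
    exact_mod_cast h3
  set N := sSup {n : ℕ | g n < TA} with hNdef
  have hNS : g N < TA := Nat.sSup_mem ⟨0, h0S⟩ hbddS
  have hN1 : TA ≤ g (N+1) := by
    by_contra hc
    push_neg at hc
    have h1 : N + 1 ≤ N := le_csSup hbddS hc
    omega
  have hNfin : g N ≠ ⊤ := ne_top_of_lt hNS
  obtain ⟨hd1, hd2, hd3, hd4⟩ := hdata N hNfin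
  have hrNtA : (g N).toReal < tA := by
    have h1 := hNS; rw [hTA] at h1
    exact (ENNReal.lt_ofReal_iff_toReal_lt hNfin).mp h1
  have hlast : |ω tA - ω ((g N).toReal)| ≤ δ :=
    grid_no_cross hω hδ hd1 hd4 hd3 hrNtA htAT (by rw [← hTA]; exact hN1)
  have hxA : |ω ((g N).toReal)| ≤ A := habove _ hd1 hrNtA.le
  -- evaluate the series
  set F : ℕ → ℝ := fun n => (if g n < TA then 2 * ω ((g n).toReal) else 0) *
      (ω ((g (n+1) ⊓ TA).toReal) - ω ((g n ⊓ TA).toReal)) with hFdef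
  have hFzero : ∀ n ∉ Finset.range (N+1), F n = 0 := by
    intro n hn
    have hnN : ¬ (g n < TA) := by
      intro hc
      exact hn (Finset.mem_range.mpr (Nat.lt_succ_of_le (le_csSup hbddS hc)))
    rw [hFdef]; simp only [if_neg hnN, zero_mul]
  have htsum : ∑' n, F n = ∑ n ∈ Finset.range (N+1), F n := tsum_eq_sum hFzero
  have hterm2 : ∀ n, n < N → F n =
      (fun m => ω ((g m).toReal)^2) (n+1) - (fun m => ω ((g m).toReal)^2) n - δ^2 := by
    intro n hn
    have hgn : g n < TA := lt_of_le_of_lt (hgmono hn.le) hNS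
    have hgn1 : g (n+1) < TA := lt_of_le_of_lt (hgmono (by omega : n+1 ≤ N)) hNS
    have hfin1 : g (n+1) ≠ ⊤ := ne_top_of_lt hgn1
    have hi1 : g n ⊓ TA = g n := inf_eq_left.mpr hgn.le
    have hi2 : g (n+1) ⊓ TA = g (n+1) := inf_eq_left.mpr hgn1.le
    have hd := (hstep n hfin1).2
    have hd2 : (ω ((g (n+1)).toReal) - ω ((g n).toReal))^2 = δ^2 := by
      rw [← sq_abs, hd]
    rw [hFdef]
    simp only [if_pos hgn, hi1, hi2]
    nlinarith [hd2]
  have htermN : F N = 2 * ω ((g N).toReal) * (ω tA - ω ((g N).toReal)) := by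
    have hi1 : g N ⊓ TA = g N := inf_eq_left.mpr hNS.le
    have hi2 : g (N+1) ⊓ TA = TA := inf_eq_right.mpr hN1
    rw [hFdef]
    simp only [if_pos hNS, hi1, hi2]
    rw [hTA, ENNReal.toReal_ofReal htA0]
  have hsumN : ∑ n ∈ Finset.range N, F n
      = ω ((g N).toReal)^2 - ω ((g 0).toReal)^2 - N * δ^2 := by
    rw [Finset.sum_congr rfl (fun n hn => hterm2 n (Finset.mem_range.mp hn)),
      Finset.sum_sub_distrib, Finset.sum_range_sub (fun m => ω ((g m).toReal)^2) N,
      Finset.sum_const, Finset.card_range, nsmul_eq_mul]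
  have hg0r : ω ((g 0).toReal) = 0 := by rw [hg0]; simp [h0]
  have hgoal : A ^ 2 ≤ δ ^ (2 - p) * V + 2 * A * δ + ∑' n, F n := by
    rw [htsum, Finset.sum_range_succ, hsumN, hg0r, htermN]
    clear_value A TA V g tA N F
    set x := ω ((g N).toReal) with hxdef
    set y := ω tA with hydef
    clear_value x y
    have hy2 : y^2 = A^2 := by rw [← sq_abs, htA_abs]
    have habs2 : |y - x| ≤ A + A := by
      calc |y - x| ≤ |y| + |x| := abs_sub y x
        _ ≤ A + A := by rw [htA_abs]; linarith [hxA]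
    have hsq : (y - x)^2 ≤ 2 * A * δ := by
      have h1 : |y - x| * |y - x| ≤ δ * (A + A) :=
        mul_le_mul hlast habs2 (abs_nonneg _) hδ.le
      nlinarith [abs_mul_abs_self (y - x)]
    have hNd : (N:ℝ) * δ^2 ≤ δ^(2-p) * V := by
      have h1 := hvarN N hNS
      have hδ2p : (0:ℝ) ≤ δ^(2-p) := (Real.rpow_pos_of_pos hδ _).le
      have hrw : δ ^ p * δ ^ (2 - p) = δ ^ (2:ℕ) := by
        rw [← Real.rpow_natCast δ 2, ← Real.rpow_add hδ]
        norm_num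
      calc (N:ℝ) * δ^2 = ((N:ℝ) * δ^p) * δ^(2-p) := by rw [mul_assoc, hrw]
        _ ≤ V * δ^(2-p) := mul_le_mul_of_nonneg_right h1 hδ2p
        _ = δ^(2-p) * V := mul_comm _ _
    have hident : y^2 = (y-x)^2 + (x^2 - 0^2 - (N:ℝ)*δ^2 + 2*x*(y-x)) + (N:ℝ)*δ^2 := by
      ring
    linarith [hy2, hsq, hNd, hident]
  exact hgoal
end
end
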